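/- Fix parameters ρ > η > 1 and s ∈ [0,1], and let ε(s) = (1−s)·ρ + s·η. Define for θ ∈ (0,1] and x ∈ (0,1) the oligopsony markdown elasticity Γ_os(x,θ) = (x·(1−x)^{1/θ−1}/(θ·(1−(1−x)^{1/θ})) − 1)·(1−x)·ε(s). Then: (i) if θ < 1, Γ_os(x,θ) < 0 for every x ∈ (0,1); and (ii) if θ = 1, Γ_os(x,1) = 0 for every x ∈ (0,1). -/

import Mathlib

/-!
With `y = 1 - x` and `t = 1 / θ > 1`, negativity of `Γ_os` amounts to
`y ^ t + t (1 - y) y ^ (t - 1) < 1`: the tangent of the strictly convex `u ↦ u ^ t` at `y`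
lies below the curve at `u = 1`. This is Bernoulli's inequality `(1 + z) ^ t > 1 + t z`
at `z = (1 - y) / y`. For `θ = 1` the markdown `μ_os(x, 1) = 1` is constant.
-/

theorem Real.rpow_add_mul_one_sub_mul_rpow_sub_one_lt_one {y t : ℝ} (hy : 0 < y) (hy1 : y ≠ 1)
    (ht : 1 < t) : y ^ t + t * (1 - y) * y ^ (t - 1) < 1 := by
  have hz : (1 - y) / y ≠ 0 := div_ne_zero (sub_ne_zero.mpr hy1.symm) hy.ne'
  have bernoulli := one_add_mul_self_lt_rpow_one_add
    (by rw [le_div_iff₀ hy]; linarith : (-1 : ℝ) ≤ (1 - y) / y) hz ht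
  have hinv : 1 + (1 - y) / y = y⁻¹ := by field_simp; ring
  rw [hinv, Real.inv_rpow hy.le, ← one_div, lt_div_iff₀ (Real.rpow_pos_of_pos hy t)] at bernoulli
  calc y ^ t + t * (1 - y) * y ^ (t - 1)
      = (1 + t * ((1 - y) / y)) * y ^ t := by
        rw [Real.rpow_sub_one hy.ne']; field_simp
    _ < 1 := bernoulli

theorem oligopsony_markdown_ratio_lt_one {θ x : ℝ} (hθ0 : 0 < θ) (hθ1 : θ < 1)
    (hx0 : 0 < x) (hx1 : x < 1) :
    x * (1 - x) ^ (1 / θ - 1) / (θ * (1 - (1 - x) ^ (1 / θ))) < 1 := by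
  have ht : 1 < 1 / θ := one_lt_one_div hθ0 hθ1
  have tangent := Real.rpow_add_mul_one_sub_mul_rpow_sub_one_lt_one
    (by linarith : 0 < 1 - x) (by linarith : 1 - x ≠ 1) ht
  have hden : 0 < θ * (1 - (1 - x) ^ (1 / θ)) :=
    mul_pos hθ0 (sub_pos.mpr (Real.rpow_lt_one (by linarith) (by linarith) (by linarith)))
  rw [div_lt_one hden]
  calc x * (1 - x) ^ (1 / θ - 1) = θ * (1 / θ * (1 - (1 - x)) * (1 - x) ^ (1 / θ - 1)) := by
        field_simp; ring
    _ < θ * (1 - (1 - x) ^ (1 / θ)) := by gcongr; linarith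

/-- The oligopsony markdown elasticity
`Γ_os(x,θ) = (x·(1−x)^{1/θ−1}/(θ·(1−(1−x)^{1/θ})) − 1)·(1−x)·ε(s)` is strictly
negative for `θ ∈ (0,1)` and `x ∈ (0,1)`, and identically zero when `θ = 1`. -/
theorem stmt12 (ρ η s : ℝ) (hη : 1 < η) (hρη : η < ρ) (hs : s ∈ Set.Icc (0:ℝ) 1) :
    let ε : ℝ := (1 - s) * ρ + s * η
    (∀ θ : ℝ, 0 < θ → θ < 1 → ∀ x ∈ Set.Ioo (0:ℝ) 1,
      (x * (1 - x) ^ (1 / θ - 1) / (θ * (1 - (1 - x) ^ (1 / θ))) - 1)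
          * (1 - x) * ε < 0) ∧
    (∀ x ∈ Set.Ioo (0:ℝ) 1,
      (x * (1 - x) ^ (1 / (1:ℝ) - 1) / (1 * (1 - (1 - x) ^ (1 / (1:ℝ)))) - 1)
          * (1 - x) * ε = 0) := by
  intro ε
  have hε : 0 < ε := by nlinarith [hs.1, hs.2]
  refine ⟨fun θ hθ0 hθ1 x ⟨hx0, hx1⟩ => ?_, fun x ⟨hx0, _⟩ => ?_⟩
  · have hratio := oligopsony_markdown_ratio_lt_one hθ0 hθ1 hx0 hx1
    exact mul_neg_of_neg_of_pos (mul_neg_of_neg_of_pos (by linarith) (by linarith)) hε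
  · simp [hx0.ne']
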